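/- Let Γ be a k₂-graph whose one-skeleton G(Γ) has no nontrivial color- and vertex-fixing graph automorphisms (the subgroup of Aut(G(Γ)) fixing all vertices is trivial). Then in any quasi-product Ω with quasi-factors Λ and Γ, the quasi-factor Γ is stable: p_▷ = id for all p ∈ G(Λ)*. -/

import Mathlib

/-- An edge-colored directed graph with `k` colors. -/
structure ColoredGraph (k : ℕ) where
  V : Type
  E : Type
  es : E → V
  er : E → V
  color : E → Fin k

namespace ColoredGraph

variable {k k₁ k₂ : ℕ}

/-- A (possibly empty) path in a colored graph: a base (source) vertex together with a
composable list of edges, listed from the range end (head of the list is the last edge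
traversed). -/
structure Pth (G : ColoredGraph k) where
  base : G.V
  edges : List G.E
  chain : edges.Chain' fun e f => G.es e = G.er f
  base_src : ∀ e ∈ edges.getLast?, G.es e = base

namespace Pth

variable {G : ColoredGraph k}

/-- The source of a path. -/
def s (p : G.Pth) : G.V := p.base

/-- The range of a path. -/
def r (p : G.Pth) : G.V := (p.edges.head?.map G.er).getD p.base

/-- The color order of a path. -/
def colors (p : G.Pth) : List (Fin k) := p.edges.map G.color

end Pth

/-- `G.IsComp p q pq` means that `pq` is the composite path "first `q`, then `p`"
(written `pq = p q` in range-on-the-left notation). -/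
def IsComp (G : ColoredGraph k) (p q pq : G.Pth) : Prop :=
  p.s = q.r ∧ pq.base = q.base ∧ pq.edges = p.edges ++ q.edges

/-- A factorization rule on the path category of a colored graph: a source-, range- and
color-order-compatible equivalence relation which respects composition (KG0) and such that
every equivalence class contains exactly one path of each permuted color order (KG4).
The quotient is then a `k`-graph. -/
structure FactRule (G : ColoredGraph k) where
  rel : G.Pth → G.Pth → Prop
  iseqv : Equivalence rel
  s_eq : ∀ p q, rel p q → p.s = q.s
  r_eq : ∀ p q, rel p q → p.r = q.r
  kg0 : ∀ p p' q q' pq p'q', rel p p' → rel q q' →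
    G.IsComp p q pq → G.IsComp p' q' p'q' → rel pq p'q'
  kg4 : ∀ (p : G.Pth) (l : List (Fin k)), l.Perm p.colors →
    ∃! q : G.Pth, rel p q ∧ q.colors = l

/-- The Cartesian (box) product of colored graphs. -/
def prodG (G₁ : ColoredGraph k₁) (G₂ : ColoredGraph k₂) : ColoredGraph (k₁ + k₂) where
  V := G₁.V × G₂.V
  E := G₁.E × G₂.V ⊕ G₁.V × G₂.E
  es e := match e with
    | .inl (e, w) => (G₁.es e, w)
    | .inr (v, f) => (v, G₂.es f)
  er e := match e with
    | .inl (e, w) => (G₁.er e, w)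
    | .inr (v, f) => (v, G₂.er f)
  color e := match e with
    | .inl (e, _) => Fin.castAdd k₂ (G₁.color e)
    | .inr (_, f) => Fin.natAdd k₁ (G₂.color f)

/-- The lift of a path of `G₁` to the slice `G₁ × {w}` of the product graph. -/
def lift₁ {G₁ : ColoredGraph k₁} {G₂ : ColoredGraph k₂} (w : G₂.V) (p : G₁.Pth) :
    (prodG G₁ G₂).Pth where
  base := (p.base, w)
  edges := p.edges.map fun e => Sum.inl (e, w)
  chain := by
    apply (List.isChain_map _).mpr
    refine p.chain.imp ?_
    intro a b h
    show ((G₁.es a, w) : G₁.V × G₂.V) = (G₁.er b, w)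
    rw [h]
  base_src := by
    intro e he
    erw [Option.mem_def, List.getLast?_map, Option.map_eq_some_iff] at he
    obtain ⟨a, ha, rfl⟩ := he
    show ((G₁.es a, w) : G₁.V × G₂.V) = (p.base, w)
    rw [p.base_src a ha]

/-- The lift of a path of `G₂` to the slice `{x} × G₂` of the product graph. -/
def lift₂ {G₁ : ColoredGraph k₁} {G₂ : ColoredGraph k₂} (x : G₁.V) (q : G₂.Pth) :
    (prodG G₁ G₂).Pth where
  base := (x, q.base)
  edges := q.edges.map fun f => Sum.inr (x, f)
  chain := by
    apply (List.isChain_map _).mpr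
    refine q.chain.imp ?_
    intro a b h
    show ((x, G₂.es a) : G₁.V × G₂.V) = (x, G₂.er b)
    rw [h]
  base_src := by
    intro e he
    erw [Option.mem_def, List.getLast?_map, Option.map_eq_some_iff] at he
    obtain ⟨a, ha, rfl⟩ := he
    show ((x, G₂.es a) : G₁.V × G₂.V) = (x, q.base)
    rw [q.base_src a ha]

/-- The underlying undirected graph is connected. -/
def Connected (G : ColoredGraph k) : Prop :=
  ∀ a b : G.V,
    Relation.ReflTransGen
      (fun u v => ∃ e : G.E, (G.es e = u ∧ G.er e = v) ∨ (G.es e = v ∧ G.er e = u)) a b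

/-- Row-finiteness at the level of the one-skeleton: for each vertex and color order there
are only finitely many paths into that vertex with that color order. -/
def RowFinite (G : ColoredGraph k) : Prop :=
  ∀ (v : G.V) (l : List (Fin k)), {p : G.Pth | p.r = v ∧ p.colors = l}.Finite

/-- A vertex-fixing automorphism of a colored graph. -/
def VertexFixingAut (G : ColoredGraph k) (F : G.E → G.E) : Prop :=
  Function.Bijective F ∧
    ∀ e, G.es (F e) = G.es e ∧ G.er (F e) = G.er e ∧ G.color (F e) = G.color e

end ColoredGraph

open ColoredGraph

/-- A quasi-product `(k₁+k₂)`-graph: its one-skeleton is the product of the one-skeletons of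
`Λ = (G₁, rLam)` and `Γ = (G₂, rGam)`, i.e. the quasi-product is given by a factorization
rule `rOmega` on the product graph; the quasi-factors embed as the slices at `base₂`
resp. `base₁` (the injective degree-compatible functors `ψ₁, ψ₂`). -/
structure QuasiProduct (k₁ k₂ : ℕ) where
  G₁ : ColoredGraph k₁
  G₂ : ColoredGraph k₂
  rLam : G₁.FactRule
  rGam : G₂.FactRule
  rOmega : (prodG G₁ G₂).FactRule
  base₁ : G₁.V
  base₂ : G₂.V
  emb₁ : ∀ p q : G₁.Pth, rLam.rel p q ↔ rOmega.rel (lift₁ base₂ p) (lift₁ base₂ q)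
  emb₂ : ∀ p q : G₂.Pth, rGam.rel p q ↔ rOmega.rel (lift₂ base₁ p) (lift₂ base₁ q)

variable {k₁ k₂ : ℕ}

/-- `ActsTo R p q q' p'` expresses, for a factorization rule `R` on the product graph, that
the Zappa–Szép actions of the associated matched pair satisfy `p ▷ q = q'` and
`q ◁ p = p'`; that is, `([p], r q)(s p, [q]) = (r p, [q'])([p'], s q)`, with `q'` and `p'`
of the same color order as `q` and `p`. -/
def ActsTo {G₁ : ColoredGraph k₁} {G₂ : ColoredGraph k₂}
    (R : (prodG G₁ G₂).FactRule) (p : G₁.Pth) (q : G₂.Pth)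
    (q' : G₂.Pth) (p' : G₁.Pth) : Prop :=
  ∃ lhs rhs : (prodG G₁ G₂).Pth,
    (prodG G₁ G₂).IsComp (lift₁ q.r p) (lift₂ p.s q) lhs ∧
    (prodG G₁ G₂).IsComp (lift₂ p.r q') (lift₁ q.s p') rhs ∧
    R.rel lhs rhs ∧ q'.colors = q.colors ∧ p'.colors = p.colors

/-- The quasi-factor `Γ` of a quasi-product is *stable* if the left action is trivial:
`p ▷ q = q` for all paths. -/
def QuasiProduct.Stable (Q : QuasiProduct k₁ k₂) : Prop :=
  ∀ (p : Q.G₁.Pth) (q q' : Q.G₂.Pth) (p' : Q.G₁.Pth),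
    ActsTo Q.rOmega p q q' p' → q' = q

/-- The factorization rule of the slice `Ω₁^w`, i.e. the rule induced on `G₁`-paths by the
slice `G₁ × {w}` of the quasi-product. -/
def QuasiProduct.relAt₁ (Q : QuasiProduct k₁ k₂) (w : Q.G₂.V) (p p' : Q.G₁.Pth) : Prop :=
  Q.rOmega.rel (lift₁ w p) (lift₁ w p')

/-- The factorization rule of the slice `Ω₂^x`. -/
def QuasiProduct.relAt₂ (Q : QuasiProduct k₁ k₂) (x : Q.G₁.V) (q q' : Q.G₂.Pth) : Prop :=
  Q.rOmega.rel (lift₂ x q) (lift₂ x q')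

/-- `F` implements a (vertex- and color-preserving) isomorphism from the quotient
`k`-graph `G*/R` to `G*/S`. -/
def RelIsoVia (G : ColoredGraph k) (R S : G.Pth → G.Pth → Prop) (F : G.Pth → G.Pth) :
    Prop :=
  (∀ p, (F p).s = p.s ∧ (F p).r = p.r ∧ (F p).colors = p.colors) ∧
  (∀ p p', R p p' ↔ S (F p) (F p')) ∧
  (∀ p', ∃ p, S (F p) p') ∧
  (∀ p1 p2 p c, G.IsComp p1 p2 p → G.IsComp (F p1) (F p2) c → S (F p) c)

/-- An isomorphism of the `k`-graphs determined by two factorization rules on the same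
colored graph, given by a vertex bijection `θV` and a map on paths `θP`. -/
def IsoOfRules {k : ℕ} (G : ColoredGraph k) (R S : G.FactRule)
    (θV : G.V → G.V) (θP : G.Pth → G.Pth) : Prop :=
  Function.Bijective θV ∧
  (∀ p, (θP p).s = θV p.s ∧ (θP p).r = θV p.r ∧ (θP p).colors = p.colors) ∧
  (∀ p p', R.rel p p' ↔ S.rel (θP p) (θP p')) ∧
  (∀ q, ∃ p, S.rel (θP p) q) ∧
  (∀ p1 p2 p c, G.IsComp p1 p2 p → G.IsComp (θP p1) (θP p2) c → S.rel (θP p) c)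

/-- `S` is the product factorization rule of `Λ = (G₁, rLam)` and `Γ = (G₂, rGam)`: its
slices are given by the factor rules and both Zappa–Szép actions are trivial. -/
def IsProductRule (G₁ : ColoredGraph k₁) (G₂ : ColoredGraph k₂)
    (rLam : G₁.FactRule) (rGam : G₂.FactRule) (S : (prodG G₁ G₂).FactRule) : Prop :=
  (∀ (w : G₂.V) (p p' : G₁.Pth), rLam.rel p p' ↔ S.rel (lift₁ w p) (lift₁ w p')) ∧
  (∀ (x : G₁.V) (q q' : G₂.Pth), rGam.rel q q' ↔ S.rel (lift₂ x q) (lift₂ x q')) ∧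
  (∀ (p : G₁.Pth) (q q' : G₂.Pth) (p' : G₁.Pth),
    ActsTo S p q q' p' → q' = q ∧ p' = p)

/-!
A vertex-fixing colored automorphism can exchange any two edges with the same source, range
and color, so the hypothesis says that an edge of `G₂` is determined by these three data.
Since `p ▷ q` has the same source, range and color order as `q`, the action fixes every edge.
For a longer path `q = q₁ q₂`, the matched-pair law
`p ▷ (q₁ q₂) = (p ▷ q₁)((q₁ ◁ p) ▷ q₂)` together with the uniqueness of factorizations in the
quasi-product gives `p ▷ q = q` by induction on the length of `q`.
-/

namespace ColoredGraph

variable {k k₁ k₂ : ℕ}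

theorem injective_es_er_color {G : ColoredGraph k}
    (hG : ∀ F : G.E → G.E, VertexFixingAut G F → F = id) :
    Function.Injective fun e => (G.es e, G.er e, G.color e) := by
  classical
  intro f f' hff'
  by_contra hne
  have hswap : ∀ e, (G.es (Equiv.swap f f' e), G.er (Equiv.swap f f' e),
      G.color (Equiv.swap f f' e)) = (G.es e, G.er e, G.color e) := by
    intro e
    rw [Equiv.swap_apply_def]
    split_ifs with h₁ h₂
    · rw [h₁]; exact hff'.symm
    · rw [h₂]; exact hff'
    · rfl
  have hid := congrFun (hG _ ⟨(Equiv.swap f f').bijective, fun e => by simpa using hswap e⟩) f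
  rw [Equiv.swap_apply_left] at hid
  exact hne hid.symm

namespace Pth

variable {G : ColoredGraph k}

theorem ext {p q : G.Pth} (hb : p.base = q.base) (he : p.edges = q.edges) : p = q := by
  cases p; cases q; cases hb; cases he; rfl

theorem r_of_edges_eq_nil {p : G.Pth} (h : p.edges = []) : p.r = p.base := by
  simp [r, h]

theorem r_of_edges_eq_cons {p : G.Pth} {e : G.E} {l : List G.E} (h : p.edges = e :: l) :
    p.r = G.er e := by
  simp [r, h]

theorem apply_es_eq_apply_base {X : Type*} (p : G.Pth) (π : G.V → X)
    (h : ∀ e ∈ p.edges, π (G.es e) = π (G.er e)) :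
    ∀ e ∈ p.edges, π (G.es e) = π p.base := by
  refine (List.IsChain.iff_mem.mp p.chain).backwards_induction _ _ ?_ ?_
  · rintro x y ⟨-, hy, hxy⟩ hpy
    rw [hxy, ← h y hy, hpy]
  · intro hne
    exact congrArg π (p.base_src _ (List.getLast?_eq_some_getLast hne))

theorem eq_of_edges_eq_nil {p q : G.Pth} (hq : q.edges = []) (hs : p.s = q.s)
    (hc : p.colors = q.colors) : p = q := by
  refine ext hs ?_
  rw [hq, ← List.map_eq_nil_iff (f := G.color)]
  rw [colors, colors, hq] at hc
  exact hc

theorem eq_of_edges_eq_singleton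
    (hG : Function.Injective fun e => (G.es e, G.er e, G.color e)) {p q : G.Pth} {f : G.E}
    (hq : q.edges = [f]) (hs : p.s = q.s) (hr : p.r = q.r)
    (hc : p.colors = q.colors) : p = q := by
  obtain ⟨f', hp⟩ : ∃ f', p.edges = [f'] := by
    rw [colors, colors, hq] at hc
    exact List.map_eq_singleton_iff.mp hc |>.imp fun _ h => h.1
  have hf : f' = f := hG <| by
    simp only [Prod.mk.injEq]
    refine ⟨?_, ?_, ?_⟩
    · rw [p.base_src f' (by simp [hp]), q.base_src f (by simp [hq])]
      exact hs
    · rw [← r_of_edges_eq_cons hp, ← r_of_edges_eq_cons hq]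
      exact hr
    · simpa [colors, hp, hq] using hc
  exact ext hs (by rw [hp, hq, hf])

def comp (p q : G.Pth) (h : p.s = q.r) : G.Pth where
  base := q.base
  edges := p.edges ++ q.edges
  chain := by
    refine List.isChain_append.mpr ⟨p.chain, q.chain, fun x hx y hy => ?_⟩
    rw [p.base_src x hx, ← s, h, r, Option.mem_def.mp hy]
    rfl
  base_src := by
    intro e he
    rcases hq : q.edges with _ | ⟨y, l⟩
    · rw [hq, List.append_nil] at he
      rw [p.base_src e he, ← s, h, r_of_edges_eq_nil hq]
    · rw [hq, List.getLast?_append_cons] at he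
      exact q.base_src e (by rw [hq]; exact he)

end Pth

theorem isComp_comp {G : ColoredGraph k} (p q : G.Pth) (h : p.s = q.r) :
    G.IsComp p q (p.comp q h) :=
  ⟨h, rfl, rfl⟩

namespace IsComp

variable {G : ColoredGraph k} {p q pq : G.Pth}

theorem unique {pq' : G.Pth} (h : G.IsComp p q pq) (h' : G.IsComp p q pq') : pq = pq' :=
  Pth.ext (h.2.1.trans h'.2.1.symm) (h.2.2.trans h'.2.2.symm)

theorem s_eq (h : G.IsComp p q pq) : pq.s = q.s := h.2.1

theorem r_eq (h : G.IsComp p q pq) : pq.r = p.r := by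
  obtain ⟨hpq, hb, he⟩ := h
  rcases hp : p.edges with _ | ⟨e, l⟩
  · rw [Pth.r_of_edges_eq_nil hp, ← Pth.s, hpq, Pth.r, Pth.r, he, hp, List.nil_append, hb]
  · rw [Pth.r_of_edges_eq_cons hp,
      Pth.r_of_edges_eq_cons (l := l ++ q.edges) (by rw [he, hp]; rfl)]

theorem colors_eq (h : G.IsComp p q pq) : pq.colors = p.colors ++ q.colors := by
  simp [Pth.colors, h.2.2]

end IsComp

theorem exists_isComp_of_edges_eq_append {G : ColoredGraph k} (P : G.Pth)
    {A B : List G.E} (h : P.edges = A ++ B) :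
    ∃ P₁ P₂ : G.Pth, G.IsComp P₁ P₂ P ∧ P₁.edges = A ∧ P₂.edges = B := by
  have hchain := P.chain
  rw [h] at hchain
  obtain ⟨hA, hB, hAB⟩ := List.isChain_append.mp hchain
  have hB_src : ∀ e ∈ B.getLast?, G.es e = P.base := by
    intro e he
    obtain ⟨hne, rfl⟩ := List.mem_getLast?_eq_getLast he
    exact P.base_src _ (by rw [h, List.getLast?_append_of_ne_nil _ hne]; exact he)
  let P₂ : G.Pth := ⟨P.base, B, hB, hB_src⟩
  refine ⟨⟨P₂.r, A, hA, fun e he => ?_⟩, P₂, ⟨rfl, rfl, h⟩, rfl, rfl⟩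
  rcases hBh : B.head? with _ | y
  · rw [List.head?_eq_none_iff.mp hBh, List.append_nil] at h
    rw [Pth.r_of_edges_eq_nil (p := P₂) (List.head?_eq_none_iff.mp hBh)]
    exact P.base_src e (by rw [h]; exact he)
  · rw [Pth.r, hBh]
    exact hAB e he y hBh

section Product

variable {G₁ : ColoredGraph k₁} {G₂ : ColoredGraph k₂}

@[simp] theorem lift₁_edges (w : G₂.V) (p : G₁.Pth) :
    (lift₁ w p).edges = p.edges.map fun e => Sum.inl (e, w) := rfl

@[simp] theorem lift₂_edges (x : G₁.V) (q : G₂.Pth) :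
    (lift₂ x q).edges = q.edges.map fun f => Sum.inr (x, f) := rfl

theorem lift₁_s (w : G₂.V) (p : G₁.Pth) : (lift₁ w p).s = (p.s, w) := rfl

theorem lift₂_s (x : G₁.V) (q : G₂.Pth) : (lift₂ x q).s = (x, q.s) := rfl

theorem lift₁_r (w : G₂.V) (p : G₁.Pth) : (lift₁ w p).r = (p.r, w) := by
  rcases h : p.edges with _ | ⟨e, l⟩
  · rw [Pth.r_of_edges_eq_nil h, Pth.r_of_edges_eq_nil (by rw [lift₁_edges, h]; rfl)]
    rfl
  · rw [Pth.r_of_edges_eq_cons h,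
      Pth.r_of_edges_eq_cons (e := Sum.inl (e, w)) (by rw [lift₁_edges, h]; rfl)]
    rfl

theorem lift₂_r (x : G₁.V) (q : G₂.Pth) : (lift₂ x q).r = (x, q.r) := by
  rcases h : q.edges with _ | ⟨e, l⟩
  · rw [Pth.r_of_edges_eq_nil h, Pth.r_of_edges_eq_nil (by rw [lift₂_edges, h]; rfl)]
    rfl
  · rw [Pth.r_of_edges_eq_cons h,
      Pth.r_of_edges_eq_cons (e := Sum.inr (x, e)) (by rw [lift₂_edges, h]; rfl)]
    rfl

theorem lift₁_s_eq_lift₂_r (p : G₁.Pth) (q : G₂.Pth) :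
    (lift₁ q.r p).s = (lift₂ p.s q).r := by
  rw [lift₁_s, lift₂_r]

theorem lift₁_colors (w : G₂.V) (p : G₁.Pth) :
    (lift₁ w p).colors = p.colors.map (Fin.castAdd k₂) := by
  simp [Pth.colors, prodG]

theorem lift₂_colors (x : G₁.V) (q : G₂.Pth) :
    (lift₂ x q).colors = q.colors.map (Fin.natAdd k₁) := by
  simp [Pth.colors, prodG]

theorem exists_eq_lift₁ (P : (prodG G₁ G₂).Pth) {L : List (Fin k₁)}
    (h : P.colors = L.map (Fin.castAdd k₂)) :
    ∃ p : G₁.Pth, P = lift₁ P.base.2 p ∧ p.colors = L := by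
  have hinl : ∀ e ∈ P.edges, ∃ a w, e = Sum.inl (a, w) := by
    intro e he
    have hmem : (prodG G₁ G₂).color e ∈ L.map (Fin.castAdd k₂) := by
      rw [← h]
      exact List.mem_map_of_mem he
    obtain ⟨c, -, hc⟩ := List.mem_map.mp hmem
    rcases e with ⟨a, w⟩ | ⟨x, f⟩
    · exact ⟨a, w, rfl⟩
    · have := congrArg Fin.val hc
      simp [prodG] at this
      omega
  have hsnd := P.apply_es_eq_apply_base Prod.snd fun e he => by
    obtain ⟨a, w, rfl⟩ := hinl e he
    rfl
  obtain ⟨l, hl⟩ : P.edges ∈ Set.range (List.map fun a => Sum.inl (a, P.base.2)) := by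
    refine (Set.range_list_map _).ge fun e he => ?_
    obtain ⟨a, w, rfl⟩ := hinl e he
    exact ⟨a, by rw [← hsnd _ he]; rfl⟩
  refine ⟨⟨P.base.1, l, ?_, fun a ha => ?_⟩, Pth.ext rfl hl.symm, ?_⟩
  · have hc := P.chain
    rw [← hl] at hc
    exact ((List.isChain_map _).mp hc).imp fun _ _ h => congrArg Prod.fst h
  · have hlast : Sum.inl (a, P.base.2) ∈ P.edges.getLast? := by
      rw [← hl]
      erw [List.getLast?_map, Option.mem_def.mp ha]
      rfl
    exact congrArg Prod.fst (P.base_src _ hlast)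
  · show l.map G₁.color = L
    refine List.map_injective_iff.mpr (Fin.castAdd_injective k₁ k₂) ?_
    rw [← h, Pth.colors, ← hl]
    simp [prodG]

theorem exists_eq_lift₂ (P : (prodG G₁ G₂).Pth) {L : List (Fin k₂)}
    (h : P.colors = L.map (Fin.natAdd k₁)) :
    ∃ q : G₂.Pth, P = lift₂ P.base.1 q ∧ q.colors = L := by
  have hinr : ∀ e ∈ P.edges, ∃ x f, e = Sum.inr (x, f) := by
    intro e he
    have hmem : (prodG G₁ G₂).color e ∈ L.map (Fin.natAdd k₁) := by
      rw [← h]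
      exact List.mem_map_of_mem he
    obtain ⟨c, -, hc⟩ := List.mem_map.mp hmem
    rcases e with ⟨a, w⟩ | ⟨x, f⟩
    · have := congrArg Fin.val hc
      simp [prodG] at this
      omega
    · exact ⟨x, f, rfl⟩
  have hfst := P.apply_es_eq_apply_base Prod.fst fun e he => by
    obtain ⟨x, f, rfl⟩ := hinr e he
    rfl
  obtain ⟨l, hl⟩ : P.edges ∈ Set.range (List.map fun f => Sum.inr (P.base.1, f)) := by
    refine (Set.range_list_map _).ge fun e he => ?_
    obtain ⟨x, f, rfl⟩ := hinr e he
    exact ⟨f, by rw [← hfst _ he]; rfl⟩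
  refine ⟨⟨P.base.2, l, ?_, fun f hf => ?_⟩, Pth.ext rfl hl.symm, ?_⟩
  · have hc := P.chain
    rw [← hl] at hc
    exact ((List.isChain_map _).mp hc).imp fun _ _ h => congrArg Prod.snd h
  · have hlast : Sum.inr (P.base.1, f) ∈ P.edges.getLast? := by
      rw [← hl]
      erw [List.getLast?_map, Option.mem_def.mp hf]
      rfl
    exact congrArg Prod.snd (P.base_src _ hlast)
  · show l.map G₂.color = L
    refine List.map_injective_iff.mpr (Fin.natAdd_injective k₂ k₁) ?_
    rw [← h, Pth.colors, ← hl]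
    simp [prodG]

theorem exists_isComp_lift₂_lift₁ (P : (prodG G₁ G₂).Pth) {L₂ : List (Fin k₂)}
    {L₁ : List (Fin k₁)}
    (h : P.colors = L₂.map (Fin.natAdd k₁) ++ L₁.map (Fin.castAdd k₂)) :
    ∃ (q : G₂.Pth) (p : G₁.Pth),
      (prodG G₁ G₂).IsComp (lift₂ P.r.1 q) (lift₁ P.s.2 p) P ∧
      q.colors = L₂ ∧ p.colors = L₁ := by
  obtain ⟨A, B, hAB, hA, hB⟩ := List.map_eq_append_iff.mp h
  obtain ⟨P₁, P₂, hP, rfl, rfl⟩ := exists_isComp_of_edges_eq_append P hAB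
  obtain ⟨q, hq, hqc⟩ := exists_eq_lift₂ P₁ hA
  obtain ⟨p, hp, hpc⟩ := exists_eq_lift₁ P₂ hB
  have hx : P₁.base.1 = P.r.1 := by
    rw [hP.r_eq, hq, lift₂_r]
    rfl
  have hw : P₂.base.2 = P.s.2 := by
    rw [hP.s_eq]
    rfl
  refine ⟨q, p, ?_, hqc, hpc⟩
  rw [← hx, ← hw, ← hq, ← hp]
  exact hP

end Product

end ColoredGraph

open ColoredGraph

section ZappaSzep

variable {G₁ : ColoredGraph k₁} {G₂ : ColoredGraph k₂} {R : (prodG G₁ G₂).FactRule}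
  {p p' : G₁.Pth} {q q' : G₂.Pth}

theorem ActsTo.colors_eq (h : ActsTo R p q q' p') :
    q'.colors = q.colors ∧ p'.colors = p.colors :=
  let ⟨_, _, _, _, _, hq, hp⟩ := h
  ⟨hq, hp⟩

theorem ActsTo.endpoints (h : ActsTo R p q q' p') :
    q'.s = q.s ∧ q'.r = q.r ∧ p'.s = p.s ∧ p'.r = p.r := by
  obtain ⟨lhs, rhs, hl, hr, hrel, -, -⟩ := h
  have hjoin := hr.1
  rw [lift₂_s, lift₁_r] at hjoin
  have hs := R.s_eq _ _ hrel
  rw [hl.s_eq, hr.s_eq, lift₂_s, lift₁_s] at hs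
  have hr' := R.r_eq _ _ hrel
  rw [hl.r_eq, hr.r_eq, lift₁_r, lift₂_r] at hr'
  exact ⟨(Prod.mk.inj hjoin).2, (Prod.mk.inj hr').2.symm, (Prod.mk.inj hs).1.symm,
    (Prod.mk.inj hjoin).1.symm⟩

theorem exists_actsTo (R : (prodG G₁ G₂).FactRule) (p : G₁.Pth) (q : G₂.Pth) :
    ∃ q' p', ActsTo R p q q' p' := by
  have hlhs := isComp_comp _ _ (lift₁_s_eq_lift₂_r p q)
  obtain ⟨rhs, ⟨hrel, hcol⟩, -⟩ := R.kg4 _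
    (q.colors.map (Fin.natAdd k₁) ++ p.colors.map (Fin.castAdd k₂))
    (by rw [hlhs.colors_eq, lift₁_colors, lift₂_colors]; exact List.perm_append_comm)
  obtain ⟨q', p', hrhs, hq', hp'⟩ := exists_isComp_lift₂_lift₁ rhs hcol
  have hr : rhs.r = (p.r, q.r) := by rw [← R.r_eq _ _ hrel, hlhs.r_eq, lift₁_r]
  have hs : rhs.s = (p.s, q.s) := by rw [← R.s_eq _ _ hrel, hlhs.s_eq, lift₂_s]
  rw [hr, hs] at hrhs
  exact ⟨q', p', _, rhs, hlhs, hrhs, hrel, hq', hp'⟩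

theorem ActsTo.unique {q₁ q₂ : G₂.Pth} {p₁ p₂ : G₁.Pth} (h₁ : ActsTo R p q q₁ p₁)
    (h₂ : ActsTo R p q q₂ p₂) : q₁ = q₂ ∧ p₁ = p₂ := by
  have hs : q₁.s = q₂.s := h₁.endpoints.1.trans h₂.endpoints.1.symm
  obtain ⟨lhs, rhs₁, hl₁, hr₁, hrel₁, hq₁, hp₁⟩ := h₁
  obtain ⟨lhs₂, rhs₂, hl₂, hr₂, hrel₂, hq₂, hp₂⟩ := h₂
  obtain rfl := hl₁.unique hl₂
  have hcolors : ∀ {q' : G₂.Pth} {p' : G₁.Pth} {rhs},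
      (prodG G₁ G₂).IsComp (lift₂ p.r q') (lift₁ q.s p') rhs →
      q'.colors = q.colors → p'.colors = p.colors →
      rhs.colors = q.colors.map (Fin.natAdd k₁) ++ p.colors.map (Fin.castAdd k₂) := by
    intro q' p' rhs h hq hp
    rw [h.colors_eq, lift₂_colors, lift₁_colors, hq, hp]
  obtain ⟨rhs, -, huniq⟩ := R.kg4 lhs
    (q.colors.map (Fin.natAdd k₁) ++ p.colors.map (Fin.castAdd k₂))
    (by rw [hl₁.colors_eq, lift₁_colors, lift₂_colors]; exact List.perm_append_comm)
  obtain rfl : rhs₁ = rhs₂ :=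
    (huniq rhs₁ ⟨hrel₁, hcolors hr₁ hq₁ hp₁⟩).trans
      (huniq rhs₂ ⟨hrel₂, hcolors hr₂ hq₂ hp₂⟩).symm
  have hlen : (lift₂ p.r q₁).edges.length = (lift₂ p.r q₂).edges.length := by
    have hlen := congrArg List.length (hq₁.trans hq₂.symm)
    simp only [Pth.colors, List.length_map] at hlen
    exact (List.length_map _).trans (hlen.trans (List.length_map _).symm)
  obtain ⟨hq, hp⟩ := List.append_inj (hr₁.2.2.symm.trans hr₂.2.2) hlen
  have hbase := hr₁.2.1.symm.trans hr₂.2.1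
  refine ⟨Pth.ext hs (List.map_injective_iff.mpr (fun _ _ h => ?_) hq),
    Pth.ext (Prod.mk.inj hbase).1 (List.map_injective_iff.mpr (fun _ _ h => ?_) hp)⟩
  · exact (Prod.mk.inj (Sum.inr_injective h)).2
  · exact (Prod.mk.inj (Sum.inl_injective h)).1

theorem ActsTo.comp {q₁ q₂ q₁' q₂' : G₂.Pth} {p₁ p₂ : G₁.Pth}
    (hA : ActsTo R p q₁ q₁' p₁) (hB : ActsTo R p₁ q₂ q₂' p₂)
    (hq : G₂.IsComp q₁ q₂ q) (hq' : G₂.IsComp q₁' q₂' q') : ActsTo R p q q' p₂ := by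
  obtain ⟨hq₁'s, -, hp₁s, hp₁r⟩ := hA.endpoints
  obtain ⟨hq₂'s, -, -, hp₂r⟩ := hB.endpoints
  obtain ⟨lhsA, rhsA, hlA, hrA, relA, hcq₁, hcp₁⟩ := hA
  obtain ⟨lhsB, rhsB, hlB, hrB, relB, hcq₂, hcp₂⟩ := hB
  have hjoin := lift₁_s_eq_lift₂_r p q
  have hM : rhsA.s = (lift₂ p.s q₂).r := by rw [hrA.s_eq, lift₁_s, lift₂_r, hp₁s, hq.1]
  have hN : (lift₂ p.r q₁').s = rhsB.r := by rw [lift₂_s, hrB.r_eq, lift₂_r, hp₁r, hq'.1]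
  have hlhs : (prodG G₁ G₂).IsComp lhsA (lift₂ p.s q₂) ((lift₁ q.r p).comp _ hjoin) := by
    refine ⟨?_, ?_, ?_⟩
    · rw [hlA.s_eq, lift₂_s, lift₂_r, hq.1]
    · exact congrArg (p.s, ·) hq.2.1
    · show (lift₁ q.r p).edges ++ (lift₂ p.s q).edges = _
      rw [hlA.2.2, hq.r_eq, lift₂_edges, lift₂_edges, lift₂_edges, hq.2.2, List.map_append]
      exact (List.append_assoc _ _ _).symm
  have hmid : (prodG G₁ G₂).IsComp (lift₂ p.r q₁') lhsB (rhsA.comp _ hM) := by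
    refine ⟨?_, ?_, ?_⟩
    · rw [lift₂_s, hlB.r_eq, lift₁_r, hp₁r, hq₁'s, hq.1]
    · rw [hlB.2.1]
      exact congrArg (·, q₂.base) hp₁s.symm
    · show rhsA.edges ++ (lift₂ p.s q₂).edges = _
      rw [hrA.2.2, hlB.2.2, hp₁s, ← hq.1, List.append_assoc]
  have hrhs : (prodG G₁ G₂).IsComp (lift₂ p.r q') (lift₁ q.s p₂)
      ((lift₂ p.r q₁').comp _ hN) := by
    refine ⟨?_, ?_, ?_⟩
    · rw [lift₂_s, lift₁_r, hp₂r, hp₁r, hq'.s_eq, hq₂'s, hq.s_eq]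
    · show rhsB.base = _
      rw [hrB.2.1, hq.s_eq]
    · show (lift₂ p.r q₁').edges ++ rhsB.edges = _
      rw [hrB.2.2, hp₁r, hq.s_eq, lift₂_edges, lift₂_edges, lift₂_edges, hq'.2.2,
        List.map_append]
      exact (List.append_assoc _ _ _).symm
  refine ⟨_, _, isComp_comp _ _ hjoin, hrhs, ?_, ?_, hcp₂.trans hcp₁⟩
  · -- `p (q₁ q₂) ~ (q₁' p₁) q₂ = q₁' (p₁ q₂) ~ q₁' (q₂' p₂)`, both `~` by (KG0)
    exact R.iseqv.trans
      (R.kg0 _ _ _ _ _ _ relA (R.iseqv.refl _) hlhs (isComp_comp _ _ hM))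
      (R.kg0 _ _ _ _ _ _ (R.iseqv.refl _) relB hmid (isComp_comp _ _ hN))
  · rw [hq'.colors_eq, hq.colors_eq, hcq₁, hcq₂]

theorem ActsTo.eq_of_injective
    (hG : Function.Injective fun e => (G₂.es e, G₂.er e, G₂.color e))
    (h : ActsTo R p q q' p') : q' = q := by
  induction hq : q.edges generalizing p q q' p' with
  | nil => exact Pth.eq_of_edges_eq_nil hq h.endpoints.1 h.colors_eq.1
  | cons f rest ih =>
    obtain ⟨q₁, q₂, hq₁₂, hq₁, hq₂⟩ :=
      exists_isComp_of_edges_eq_append q (A := [f]) hq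
    obtain ⟨q₁', p₁, hA⟩ := exists_actsTo R p q₁
    obtain ⟨q₂', p₂, hB⟩ := exists_actsTo R p₁ q₂
    obtain rfl : q₁' = q₁ :=
      Pth.eq_of_edges_eq_singleton hG hq₁ hA.endpoints.1 hA.endpoints.2.1 hA.colors_eq.1
    obtain rfl : q₂' = q₂ := ih hB hq₂
    exact (h.unique (hA.comp hB hq₁₂ hq₁₂)).1

end ZappaSzep

open ColoredGraph in
/-- Let `Γ` be a `k₂`-graph whose one-skeleton admits no nontrivial
vertex-fixing colored-graph automorphism. Then in any quasi-product `Ω` with quasi-factors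
`Λ` and `Γ`, the quasi-factor `Γ` is stable: `p ▷ q = q` for all paths. -/
theorem stmt12 {k₁ k₂ : ℕ} (Q : QuasiProduct k₁ k₂)
    (H : ∀ F : Q.G₂.E → Q.G₂.E, VertexFixingAut Q.G₂ F → F = id) :
    Q.Stable :=
  fun _ _ _ _ h => h.eq_of_injective (injective_es_er_color H)
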